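/- arXiv:2411.02947 — 2 statements merged into one kernel-verified Lean document; each statement's English description precedes it below -/
import Mathlib

section
/- Let d,d_Z,T ∈ ℕ, let μ_φ: ℝ^{dT} → ℝ^{d_Z T}, σ_φ: ℝ^{dT} → ℝ^{d_Z T} and De_θ: ℝ^{d_Z T} → ℝ^{dT} be causal maps, let X ∼ μ_data be a random path in ℝ^{dT} and ε ∼ N(0, I_{d_Z T}) a standard Gaussian independent of X, and set Z = μ_φ(X) + σ_φ(X)⊙ε (componentwise product) and Y = De_θ(Z). Then for every t = 1,…,T−1 the conditional law of X_{t+1} given (X_{1:t}, Y_{1:t}) equals the conditional law of X_{t+1} given X_{1:t}; consequently the joint law (X,Y)_#P is a causal coupling from μ_data to μ_rec := Law(Y). -/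
open MeasureTheory ProbabilityTheory ENNReal

noncomputable section

/-- The path space `ℝ^{dT}`: paths of length `T` with values in `ℝ^d`. -/
abbrev TPath (d T : ℕ) := Fin T → Fin d → ℝ

/-- Euclidean norm on `ℝ^d`. -/
def eNorm {d : ℕ} (v : Fin d → ℝ) : ℝ := Real.sqrt (∑ i, (v i) ^ 2)

/-- The norm `‖x‖ = ∑_{t=1}^T ‖x_t‖_{ℝ^d}` on the path space. -/
def pathNorm {d T : ℕ} (x : TPath d T) : ℝ := ∑ t, eNorm (x t)

/-- The truncated history `x_{1:t}` of a path, encoded by zeroing out coordinates after time `t`. -/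
def hist {d T : ℕ} (t : ℕ) (x : TPath d T) : TPath d T :=
  fun s => if (s : ℕ) < t then x s else 0

/-- `π` is a coupling of `μ` and `ν`. -/
def IsCoupling {d₁ d₂ T : ℕ} (μ : Measure (TPath d₁ T)) (ν : Measure (TPath d₂ T))
    (π : Measure (TPath d₁ T × TPath d₂ T)) : Prop :=
  π.map Prod.fst = μ ∧ π.map Prod.snd = ν

/-- A coupling `π` is causal: for every `t`, the conditional law of `y_{1:t}` given the full
path `x` depends only on `x_{1:t}`, expressed via conditional expectations of bounded
measurable functions of `y_{1:t}`. -/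
def IsCausalCoupling {d₁ d₂ T : ℕ} (π : Measure (TPath d₁ T × TPath d₂ T)) : Prop :=
  ∀ t : ℕ, t < T → ∀ f : TPath d₂ T → ℝ, Measurable f → (∀ y, f (hist t y) = f y) →
    (∃ C, ∀ y, |f y| ≤ C) →
    π[(fun p => f p.2) | MeasurableSpace.comap Prod.fst inferInstance]
      =ᵐ[π] π[(fun p => f p.2) | MeasurableSpace.comap (fun p => hist t p.1) inferInstance]

/-- A coupling is bicausal if both it and its coordinate swap are causal. -/
def IsBicausalCoupling {d T : ℕ} (π : Measure (TPath d T × TPath d T)) : Prop :=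
  IsCausalCoupling π ∧ IsCausalCoupling (π.map Prod.swap)

/-- Causal (first order) Wasserstein distance `CW₁`. -/
def CW1 {d T : ℕ} (μ ν : Measure (TPath d T)) : ℝ :=
  sInf { r | ∃ π : Measure (TPath d T × TPath d T), IsCoupling μ ν π ∧ IsCausalCoupling π ∧
    r = ∫ p, pathNorm (p.1 - p.2) ∂π }

/-- Adapted (first order) Wasserstein distance `AW₁`. -/
def AW1 {d T : ℕ} (μ ν : Measure (TPath d T)) : ℝ :=
  sInf { r | ∃ π : Measure (TPath d T × TPath d T), IsCoupling μ ν π ∧ IsBicausalCoupling π ∧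
    r = ∫ p, pathNorm (p.1 - p.2) ∂π }

/-- Total variation `TV₀`. -/
def TV0 {d T : ℕ} (μ ν : Measure (TPath d T)) : ℝ :=
  sInf { r | ∃ π : Measure (TPath d T × TPath d T), IsCoupling μ ν π ∧
    r = (π {p | p.1 ≠ p.2}).toReal }

/-- Adapted total variation `AV₀`. -/
def AV0 {d T : ℕ} (μ ν : Measure (TPath d T)) : ℝ :=
  sInf { r | ∃ π : Measure (TPath d T × TPath d T), IsCoupling μ ν π ∧ IsBicausalCoupling π ∧
    r = (π {p | p.1 ≠ p.2}).toReal }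

open Classical in
/-- Kullback–Leibler divergence, valued in `ℝ≥0∞`. -/
def KLDiv {E : Type*} [MeasurableSpace E] (μ ν : Measure E) : ℝ≥0∞ :=
  if μ ≪ ν ∧ Integrable (llr μ ν) μ then ENNReal.ofReal (∫ x, llr μ ν x ∂μ) else ⊤

/-- A map between path spaces is causal if its `t`-th coordinate depends only on `x_{1:t}`,
with Borel-measurability. -/
def IsCausalMap {d₁ d₂ T : ℕ} (𝒯 : TPath d₁ T → TPath d₂ T) : Prop :=
  Measurable 𝒯 ∧
    ∀ (t : Fin T) (x x' : TPath d₁ T), (∀ s : Fin T, s ≤ t → x s = x' s) → 𝒯 x t = 𝒯 x' t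

/-- Standard Gaussian measure `N(0, I_{d_Z T})`. -/
def stdGaussian (dZ T : ℕ) : Measure (TPath dZ T) :=
  Measure.pi fun _ : Fin T => Measure.pi fun _ : Fin dZ => gaussianReal 0 1

/- ————————————————— Auxiliary lemmas ————————————————— -/

section Aux

variable {Ω A B A' A'' : Type*} [MeasurableSpace Ω] [MeasurableSpace A] [MeasurableSpace B]
  [MeasurableSpace A'] [MeasurableSpace A'']

/-- A bounded a.e.-strongly measurable function on a finite measure space is integrable. -/
lemma intOfBdd {μ : Measure Ω} [IsFiniteMeasure μ] {f : Ω → ℝ}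
    (hf : AEStronglyMeasurable f μ) {C : ℝ} (h : ∀ ω, |f ω| ≤ C) : Integrable f μ :=
  ⟨hf, HasFiniteIntegral.of_bounded (C := C)
    (Filter.Eventually.of_forall fun ω => by simpa [Real.norm_eq_abs] using h ω)⟩

/-- Fubini for a bounded measurable function of two independent random variables. -/
lemma fubini_indep (P : Measure Ω) [IsProbabilityMeasure P] {X : Ω → A} {ε : Ω → B}
    (hX : Measurable X) (hε : Measurable ε) (hindep : IndepFun X ε P)
    {Φ : A × B → ℝ} (hΦ : Measurable Φ) {C : ℝ} (hC : ∀ p, |Φ p| ≤ C) :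
    ∫ ω, Φ (X ω, ε ω) ∂P = ∫ x, ∫ e, Φ (x, e) ∂(P.map ε) ∂(P.map X) := by
  have hmap := (indepFun_iff_map_prod_eq_prod_map_map hX.aemeasurable hε.aemeasurable).mp hindep
  haveI : IsProbabilityMeasure (P.map X) := Measure.isProbabilityMeasure_map hX.aemeasurable
  haveI : IsProbabilityMeasure (P.map ε) := Measure.isProbabilityMeasure_map hε.aemeasurable
  calc ∫ ω, Φ (X ω, ε ω) ∂P
      = ∫ p, Φ p ∂(P.map (fun ω => (X ω, ε ω))) :=
        (integral_map (hX.prodMk hε).aemeasurable hΦ.aestronglyMeasurable).symm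
    _ = ∫ p, Φ p ∂((P.map X).prod (P.map ε)) := by rw [hmap]
    _ = ∫ x, ∫ e, Φ (x, e) ∂(P.map ε) ∂(P.map X) :=
        integral_prod _ (intOfBdd hΦ.aestronglyMeasurable hC)

/-- Key abstract lemma: if `X ⟂ ε` and the extra conditioning information is a measurable
function of `(φ(X), ε)` whose first component is `φ(X)`, then conditioning a bounded
function of `X` on it is the same as conditioning on `φ(X)` alone. -/
lemma condexp_indep_factor (P : Measure Ω) [IsProbabilityMeasure P] {X : Ω → A} {ε : Ω → B}
    (hX : Measurable X) (hε : Measurable ε) (hindep : IndepFun X ε P)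
    {φ : A → A'} (hφ : Measurable φ) {κ : A' × B → A''} (hκ : Measurable κ)
    {W : A → ℝ} (hW : Measurable W) {C : ℝ} (hWC : ∀ a, |W a| ≤ C)
    {ξ : Ω → A' × A''} (hξ : ∀ ω, ξ ω = (φ (X ω), κ (φ (X ω), ε ω))) :
    P[(fun ω => W (X ω)) | MeasurableSpace.comap ξ inferInstance]
      =ᵐ[P] P[(fun ω => W (X ω)) | MeasurableSpace.comap (fun ω => φ (X ω)) inferInstance] := by
  have hξm : Measurable ξ := by
    have h1 : Measurable fun ω => (φ (X ω), κ (φ (X ω), ε ω)) :=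
      (hφ.comp hX).prodMk (hκ.comp ((hφ.comp hX).prodMk hε))
    have h2 : ξ = fun ω => (φ (X ω), κ (φ (X ω), ε ω)) := funext hξ
    rw [h2]; exact h1
  have hm₂ : (MeasurableSpace.comap ξ inferInstance) ≤ ‹MeasurableSpace Ω› := hξm.comap_le
  have hm₁ : (MeasurableSpace.comap (fun ω => φ (X ω)) inferInstance) ≤ ‹MeasurableSpace Ω› := (hφ.comp hX).comap_le
  have hm₁₂ : (MeasurableSpace.comap (fun ω => φ (X ω)) inferInstance) ≤ (MeasurableSpace.comap ξ inferInstance) := by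
    intro s hs
    rw [MeasurableSpace.measurableSet_comap] at hs
    obtain ⟨A₀, hA₀, rfl⟩ := hs
    rw [MeasurableSpace.measurableSet_comap]
    refine ⟨Prod.fst ⁻¹' A₀, measurable_fst hA₀, ?_⟩
    ext ω
    simp [hξ ω]
  haveI : IsFiniteMeasure (P.trim hm₂) := isFiniteMeasure_trim hm₂
  haveI : IsFiniteMeasure (P.trim hm₁) := isFiniteMeasure_trim hm₁
  haveI : SigmaFinite (P.trim hm₂) := inferInstance
  haveI : SigmaFinite (P.trim hm₁) := inferInstance
  haveI : IsProbabilityMeasure (P.map ε) := Measure.isProbabilityMeasure_map hε.aemeasurable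
  have hWXm : Measurable fun ω => W (X ω) := hW.comp hX
  have hWXint : Integrable (fun ω => W (X ω)) P :=
    intOfBdd hWXm.aestronglyMeasurable (fun ω => hWC (X ω))
  refine (ae_eq_condExp_of_forall_setIntegral_eq (μ := P) (f := fun ω => W (X ω))
    (g := P[(fun ω => W (X ω)) | (MeasurableSpace.comap (fun ω => φ (X ω)) inferInstance)]) hm₂ hWXint
    (fun s _ _ => integrable_condExp.integrableOn) ?_
    ((stronglyMeasurable_condExp.mono hm₁₂).aestronglyMeasurable)).symm
  intro s hs hfin
  rw [MeasurableSpace.measurableSet_comap] at hs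
  obtain ⟨D, hD, rfl⟩ := hs
  -- the indicator kernel
  set χ : A' × B → ℝ :=
    ((fun q : A' × B => (q.1, κ q)) ⁻¹' D).indicator (fun _ => (1 : ℝ)) with hχdef
  have hDpre : MeasurableSet ((fun q : A' × B => (q.1, κ q)) ⁻¹' D) :=
    (measurable_fst.prodMk hκ) hD
  have hχm : Measurable χ := measurable_const.indicator hDpre
  have hχb : ∀ q, |χ q| ≤ 1 := by
    intro q
    by_cases hq : (q.1, κ q) ∈ D <;> simp [hχdef, Set.indicator_apply, hq]
  set ψ : A' → ℝ := fun a' => ∫ b, χ (a', b) ∂(P.map ε) with hψdef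
  have hψm : Measurable ψ := hχm.stronglyMeasurable.integral_prod_right'.measurable
  have hψb : ∀ a', |ψ a'| ≤ 1 := by
    intro a'
    have hb := norm_integral_le_of_norm_le_const (μ := P.map ε)
      (f := fun b => χ (a', b)) (C := 1)
      (Filter.Eventually.of_forall fun b => by simpa [Real.norm_eq_abs] using hχb (a', b))
    simpa [hψdef, Real.norm_eq_abs] using hb
  -- core Fubini computation
  have core : ∀ θ : A → ℝ, Measurable θ → ∀ Cθ : ℝ, (∀ a, |θ a| ≤ Cθ) →
      ∫ ω, θ (X ω) * χ (φ (X ω), ε ω) ∂P = ∫ ω, θ (X ω) * ψ (φ (X ω)) ∂P := by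
    intro θ hθ Cθ hθb
    have hΦm : Measurable fun p : A × B => θ p.1 * χ (φ p.1, p.2) :=
      (hθ.comp measurable_fst).mul (hχm.comp ((hφ.comp measurable_fst).prodMk measurable_snd))
    have hΦb : ∀ p : A × B, |θ p.1 * χ (φ p.1, p.2)| ≤ |Cθ| * 1 := by
      intro p
      rw [abs_mul]
      exact mul_le_mul ((hθb p.1).trans (le_abs_self _)) (hχb _) (abs_nonneg _) (abs_nonneg _)
    calc ∫ ω, θ (X ω) * χ (φ (X ω), ε ω) ∂P
        = ∫ x, ∫ e, θ x * χ (φ x, e) ∂(P.map ε) ∂(P.map X) :=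
          fubini_indep P hX hε hindep hΦm hΦb
      _ = ∫ x, θ x * ψ (φ x) ∂(P.map X) := by
          refine integral_congr_ae (Filter.Eventually.of_forall fun x => ?_)
          simp only [hψdef]
          rw [integral_const_mul]
      _ = ∫ ω, θ (X ω) * ψ (φ (X ω)) ∂P :=
          integral_map hX.aemeasurable ((hθ.mul (hψm.comp hφ)).aestronglyMeasurable)
  -- indicator bookkeeping
  have hsm0 : MeasurableSet (ξ ⁻¹' D) := hξm hD
  have hind : ∀ (ρ : Ω → ℝ) (ω : Ω),
      (ξ ⁻¹' D).indicator ρ ω = ρ ω * χ (φ (X ω), ε ω) := by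
    intro ρ ω
    have hmem : ω ∈ ξ ⁻¹' D ↔ (φ (X ω), κ (φ (X ω), ε ω)) ∈ D := by
      rw [Set.mem_preimage, hξ ω]
    by_cases hq : (φ (X ω), κ (φ (X ω), ε ω)) ∈ D
    · simp [Set.indicator_apply, hmem, hq, hχdef]
    · simp [Set.indicator_apply, hmem, hq, hχdef]
  have hsetint : ∀ ρ : Ω → ℝ,
      ∫ ω in ξ ⁻¹' D, ρ ω ∂P = ∫ ω, ρ ω * χ (φ (X ω), ε ω) ∂P := by
    intro ρ
    rw [← integral_indicator hsm0]
    exact integral_congr_ae (Filter.Eventually.of_forall fun ω => hind ρ ω)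
  set u : Ω → ℝ := fun ω => ψ (φ (X ω)) with hudef
  have hφXm₁ : Measurable[(MeasurableSpace.comap (fun ω => φ (X ω)) inferInstance)] fun ω => φ (X ω) :=
    (measurable_iff_comap_le (f := fun ω => φ (X ω))).mpr le_rfl
  have hu_m₁ : Measurable[(MeasurableSpace.comap (fun ω => φ (X ω)) inferInstance)] u := hψm.comp hφXm₁
  have hu_sm : StronglyMeasurable[(MeasurableSpace.comap (fun ω => φ (X ω)) inferInstance)] u := hu_m₁.stronglyMeasurable
  have hu_m : Measurable u := hψm.comp (hφ.comp hX)
  have hu_b : ∀ ω, |u ω| ≤ 1 := fun ω => hψb _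
  have hu_int : Integrable u P := intOfBdd hu_m.aestronglyMeasurable hu_b
  -- the indicator of the conditioning set
  set inds : Ω → ℝ := (ξ ⁻¹' D).indicator (fun _ => (1 : ℝ)) with hindsdef
  have hinds_m : Measurable inds := measurable_const.indicator hsm0
  have hinds_b : ∀ ω, |inds ω| ≤ 1 := by
    intro ω
    by_cases hq : ω ∈ ξ ⁻¹' D <;> simp [hindsdef, Set.indicator_apply, hq]
  have hinds_int : Integrable inds P := intOfBdd hinds_m.aestronglyMeasurable hinds_b
  have hinds_eq : ∀ ω, inds ω = χ (φ (X ω), ε ω) := by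
    intro ω
    have h1 := hind (fun _ => (1 : ℝ)) ω
    simpa [hindsdef] using h1
  -- u is a version of the conditional expectation of inds
  have claim2 : u =ᵐ[P] P[inds | (MeasurableSpace.comap (fun ω => φ (X ω)) inferInstance)] := by
    refine ae_eq_condExp_of_forall_setIntegral_eq hm₁ hinds_int
      (fun s' _ _ => hu_int.integrableOn) ?_ hu_sm.aestronglyMeasurable
    intro s' hs' hfin'
    rw [MeasurableSpace.measurableSet_comap] at hs'
    obtain ⟨B₀, hB₀, rfl⟩ := hs'
    set θB : A → ℝ := (φ ⁻¹' B₀).indicator (fun _ => (1 : ℝ)) with hθBdef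
    have hθBm : Measurable θB := measurable_const.indicator (hφ hB₀)
    have hθBb : ∀ a, |θB a| ≤ 1 := by
      intro a
      by_cases hq : φ a ∈ B₀ <;> simp [hθBdef, Set.indicator_apply, hq]
    have hs'm : MeasurableSet ((fun ω => φ (X ω)) ⁻¹' B₀) := (hφ.comp hX) hB₀
    have h1 : ∫ ω in (fun ω => φ (X ω)) ⁻¹' B₀, u ω ∂P
        = ∫ ω, θB (X ω) * ψ (φ (X ω)) ∂P := by
      rw [← integral_indicator hs'm]
      refine integral_congr_ae (Filter.Eventually.of_forall fun ω => ?_)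
      by_cases hq : φ (X ω) ∈ B₀ <;>
        simp [Set.indicator_apply, Set.mem_preimage, hq, hθBdef, hudef]
    have h2 : ∫ ω in (fun ω => φ (X ω)) ⁻¹' B₀, inds ω ∂P
        = ∫ ω, θB (X ω) * χ (φ (X ω), ε ω) ∂P := by
      rw [← integral_indicator hs'm]
      refine integral_congr_ae (Filter.Eventually.of_forall fun ω => ?_)
      by_cases hq : φ (X ω) ∈ B₀ <;>
        simp [Set.indicator_apply, Set.mem_preimage, hq, hθBdef, hinds_eq ω]
    rw [h1, h2, core θB hθBm 1 hθBb]
  -- claim 3 : ∫ u * W(X) = ∫ u * condexp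
  have claim3 : ∫ ω, u ω * W (X ω) ∂P
      = ∫ ω, u ω * (P[(fun ω => W (X ω)) | (MeasurableSpace.comap (fun ω => φ (X ω)) inferInstance)]) ω ∂P := by
    have hmul : P[u * (fun ω => W (X ω)) | (MeasurableSpace.comap (fun ω => φ (X ω)) inferInstance)]
        =ᵐ[P] u * P[(fun ω => W (X ω)) | (MeasurableSpace.comap (fun ω => φ (X ω)) inferInstance)] :=
      condExp_stronglyMeasurable_mul_of_bound hm₁ hu_sm hWXint 1
        (Filter.Eventually.of_forall fun ω => by simpa [Real.norm_eq_abs] using hu_b ω)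
    calc ∫ ω, u ω * W (X ω) ∂P
        = ∫ ω, (u * fun ω => W (X ω)) ω ∂P := rfl
      _ = ∫ ω, (P[u * (fun ω => W (X ω)) | (MeasurableSpace.comap (fun ω => φ (X ω)) inferInstance)]) ω ∂P := (integral_condExp hm₁).symm
      _ = ∫ ω, (u * P[(fun ω => W (X ω)) | (MeasurableSpace.comap (fun ω => φ (X ω)) inferInstance)]) ω ∂P := integral_congr_ae hmul
      _ = ∫ ω, u ω * (P[(fun ω => W (X ω)) | (MeasurableSpace.comap (fun ω => φ (X ω)) inferInstance)]) ω ∂P := rfl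
  -- left side
  have hleft : ∫ ω in ξ ⁻¹' D, (P[(fun ω => W (X ω)) | (MeasurableSpace.comap (fun ω => φ (X ω)) inferInstance)]) ω ∂P
      = ∫ ω, u ω * (P[(fun ω => W (X ω)) | (MeasurableSpace.comap (fun ω => φ (X ω)) inferInstance)]) ω ∂P := by
    have hgind_int : Integrable (P[(fun ω => W (X ω)) | (MeasurableSpace.comap (fun ω => φ (X ω)) inferInstance)] * inds) P := by
      have h0 : Integrable (fun ω => inds ω * (P[(fun ω => W (X ω)) | (MeasurableSpace.comap (fun ω => φ (X ω)) inferInstance)]) ω) P :=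
        integrable_condExp.bdd_mul (c := 1) hinds_m.aestronglyMeasurable
          (Filter.Eventually.of_forall fun ω => by simpa [Real.norm_eq_abs] using hinds_b ω)
      exact h0.congr (Filter.Eventually.of_forall fun ω => by
        simp [Pi.mul_apply, mul_comm])
    have hmul : P[P[(fun ω => W (X ω)) | (MeasurableSpace.comap (fun ω => φ (X ω)) inferInstance)] * inds | (MeasurableSpace.comap (fun ω => φ (X ω)) inferInstance)]
        =ᵐ[P] P[(fun ω => W (X ω)) | (MeasurableSpace.comap (fun ω => φ (X ω)) inferInstance)] * P[inds | (MeasurableSpace.comap (fun ω => φ (X ω)) inferInstance)] :=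
      condExp_mul_of_stronglyMeasurable_left stronglyMeasurable_condExp hgind_int hinds_int
    calc ∫ ω in ξ ⁻¹' D, (P[(fun ω => W (X ω)) | (MeasurableSpace.comap (fun ω => φ (X ω)) inferInstance)]) ω ∂P
        = ∫ ω, (P[(fun ω => W (X ω)) | (MeasurableSpace.comap (fun ω => φ (X ω)) inferInstance)] * inds) ω ∂P := by
          rw [← integral_indicator hsm0]
          refine integral_congr_ae (Filter.Eventually.of_forall fun ω => ?_)
          by_cases hq : ω ∈ ξ ⁻¹' D <;>
            simp [Set.indicator_apply, hq, hindsdef, Pi.mul_apply]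
      _ = ∫ ω, (P[P[(fun ω => W (X ω)) | (MeasurableSpace.comap (fun ω => φ (X ω)) inferInstance)] * inds | (MeasurableSpace.comap (fun ω => φ (X ω)) inferInstance)]) ω ∂P :=
          (integral_condExp hm₁).symm
      _ = ∫ ω, (P[(fun ω => W (X ω)) | (MeasurableSpace.comap (fun ω => φ (X ω)) inferInstance)] * P[inds | (MeasurableSpace.comap (fun ω => φ (X ω)) inferInstance)]) ω ∂P :=
          integral_congr_ae hmul
      _ = ∫ ω, u ω * (P[(fun ω => W (X ω)) | (MeasurableSpace.comap (fun ω => φ (X ω)) inferInstance)]) ω ∂P := by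
          refine integral_congr_ae ?_
          filter_upwards [claim2] with ω hω
          simp only [Pi.mul_apply, ← hω]
          ring
  -- right side
  have hright : ∫ ω in ξ ⁻¹' D, W (X ω) ∂P = ∫ ω, u ω * W (X ω) ∂P := by
    calc ∫ ω in ξ ⁻¹' D, W (X ω) ∂P
        = ∫ ω, W (X ω) * χ (φ (X ω), ε ω) ∂P := hsetint _
      _ = ∫ ω, W (X ω) * ψ (φ (X ω)) ∂P := core W hW C hWC
      _ = ∫ ω, u ω * W (X ω) ∂P :=
          integral_congr_ae (Filter.Eventually.of_forall fun ω => mul_comm _ _)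
  rw [hleft, hright, claim3]

end Aux

section VAE

variable {d dZ T : ℕ}

/-- The latent path map. -/
def Zmap (μφ σφ : TPath d T → TPath dZ T) : TPath d T × TPath dZ T → TPath dZ T :=
  fun p s i => μφ p.1 s i + σφ p.1 s i * p.2 s i

/-- The reconstruction map. -/
def Ymap (μφ σφ : TPath d T → TPath dZ T) (De : TPath dZ T → TPath d T) :
    TPath d T × TPath dZ T → TPath d T :=
  fun p => De (Zmap μφ σφ p)

lemma measurable_hist {t : ℕ} : Measurable (hist t : TPath d T → TPath d T) := by
  apply measurable_pi_lambda
  intro s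
  unfold hist
  by_cases h : (s : ℕ) < t
  · simpa [h] using measurable_pi_apply s
  · simpa [h] using (measurable_const : Measurable fun _ : TPath d T => (0 : Fin d → ℝ))

lemma hist_hist {t : ℕ} (x : TPath d T) : hist t (hist t x) = hist t x := by
  funext s
  by_cases h : (s : ℕ) < t <;> simp [hist, h]

lemma measurable_Zmap {μφ σφ : TPath d T → TPath dZ T}
    (hμφ : Measurable μφ) (hσφ : Measurable σφ) : Measurable (Zmap μφ σφ) := by
  apply measurable_pi_lambda
  intro s
  apply measurable_pi_lambda
  intro i
  exact ((measurable_pi_apply i).comp ((measurable_pi_apply s).comp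
      (hμφ.comp measurable_fst))).add
    (((measurable_pi_apply i).comp ((measurable_pi_apply s).comp
      (hσφ.comp measurable_fst))).mul
      ((measurable_pi_apply i).comp ((measurable_pi_apply s).comp measurable_snd)))

lemma measurable_Ymap {μφ σφ : TPath d T → TPath dZ T} {De : TPath dZ T → TPath d T}
    (hμφ : Measurable μφ) (hσφ : Measurable σφ) (hDe : Measurable De) :
    Measurable (Ymap μφ σφ De) :=
  hDe.comp (measurable_Zmap hμφ hσφ)

/-- Causality of the VAE: before time `t`, the output path only depends on `hist t x`. -/
lemma Ymap_hist {μφ σφ : TPath d T → TPath dZ T} {De : TPath dZ T → TPath d T}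
    (hμφ : IsCausalMap μφ) (hσφ : IsCausalMap σφ) (hDe : IsCausalMap De)
    (t : ℕ) (x : TPath d T) (e : TPath dZ T) (s : Fin T) (hs : (s : ℕ) < t) :
    Ymap μφ σφ De (hist t x, e) s = Ymap μφ σφ De (x, e) s := by
  apply hDe.2 s
  intro u hu
  have hagree : ∀ v : Fin T, v ≤ u → hist t x v = x v := by
    intro v hv
    have hvt : (v : ℕ) < t := lt_of_le_of_lt (le_trans hv hu) hs
    simp [hist, hvt]
  have hμ : μφ (hist t x) u = μφ x u := hμφ.2 u _ _ hagree
  have hσ : σφ (hist t x) u = σφ x u := hσφ.2 u _ _ hagree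
  funext i
  show μφ (hist t x) u i + σφ (hist t x) u i * e u i = μφ x u i + σφ x u i * e u i
  rw [hμ, hσ]

lemma hist_Ymap {μφ σφ : TPath d T → TPath dZ T} {De : TPath dZ T → TPath d T}
    (hμφ : IsCausalMap μφ) (hσφ : IsCausalMap σφ) (hDe : IsCausalMap De)
    (t : ℕ) (x : TPath d T) (e : TPath dZ T) :
    hist t (Ymap μφ σφ De (hist t x, e)) = hist t (Ymap μφ σφ De (x, e)) := by
  funext s
  by_cases h : (s : ℕ) < t
  · simp only [hist, if_pos h]
    exact Ymap_hist hμφ hσφ hDe t x e s h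
  · simp [hist, h]

end VAE

/-- In the time-causal VAE, the conditional law of `X_{t+1}` given `(X_{1:t}, Y_{1:t})`
equals the one given `X_{1:t}`; consequently `(X,Y)_#P` is a causal coupling from
`μ_data` to `μ_rec`. -/
theorem stmt4 (d dZ T : ℕ) {Ω : Type*} [MeasurableSpace Ω] (P : Measure Ω)
    [IsProbabilityMeasure P]
    (μφ σφ : TPath d T → TPath dZ T) (De : TPath dZ T → TPath d T)
    (hμφ : IsCausalMap μφ) (hσφ : IsCausalMap σφ) (hDe : IsCausalMap De)
    (X : Ω → TPath d T) (ε : Ω → TPath dZ T) (hX : Measurable X) (hε : Measurable ε)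
    (hεlaw : P.map ε = stdGaussian dZ T) (hindep : IndepFun X ε P)
    (Z : Ω → TPath dZ T) (hZ : Z = fun ω t i => μφ (X ω) t i + σφ (X ω) t i * ε ω t i)
    (Y : Ω → TPath d T) (hY : Y = fun ω => De (Z ω)) :
    (∀ t : ℕ, 1 ≤ t → ∀ ht : t < T, ∀ f : (Fin d → ℝ) → ℝ, Measurable f →
      (∃ C, ∀ v, |f v| ≤ C) →
      P[(fun ω => f (X ω ⟨t, ht⟩)) |
          MeasurableSpace.comap (fun ω => (hist t (X ω), hist t (Y ω))) inferInstance]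
        =ᵐ[P] P[(fun ω => f (X ω ⟨t, ht⟩)) |
          MeasurableSpace.comap (fun ω => hist t (X ω)) inferInstance]) ∧
    IsCoupling (P.map X) (P.map Y) (P.map fun ω => (X ω, Y ω)) ∧
    IsCausalCoupling (P.map fun ω => (X ω, Y ω)) := by
  have hYm' : Measurable (Ymap μφ σφ De) := measurable_Ymap hμφ.1 hσφ.1 hDe.1
  have hYeq : ∀ ω, Y ω = Ymap μφ σφ De (X ω, ε ω) := by
    intro ω
    rw [hY, hZ]
    rfl
  have hYmeas : Measurable Y := by
    have hYfun : Y = fun ω => Ymap μφ σφ De (X ω, ε ω) := funext hYeq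
    rw [hYfun]
    exact hYm'.comp (hX.prodMk hε)
  have hpairm : Measurable fun ω => (X ω, Y ω) := hX.prodMk hYmeas
  refine ⟨?_, ?_, ?_⟩
  · -- Part 1
    intro t h1t ht f hf hbd
    obtain ⟨C, hC⟩ := hbd
    have hκm : Measurable fun q : TPath d T × TPath dZ T => hist t (Ymap μφ σφ De q) :=
      measurable_hist.comp hYm'
    have hξ : ∀ ω, (fun ω => (hist t (X ω), hist t (Y ω))) ω
        = (hist t (X ω), (fun q : TPath d T × TPath dZ T => hist t (Ymap μφ σφ De q))
            (hist t (X ω), ε ω)) := by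
      intro ω
      have h2 : (fun q : TPath d T × TPath dZ T => hist t (Ymap μφ σφ De q))
          (hist t (X ω), ε ω) = hist t (Y ω) := by
        show hist t (Ymap μφ σφ De (hist t (X ω), ε ω)) = hist t (Y ω)
        rw [hist_Ymap hμφ hσφ hDe, hYeq ω]
      simp only [h2]
    exact condexp_indep_factor P hX hε hindep measurable_hist hκm
      (hf.comp (measurable_pi_apply ⟨t, ht⟩)) (fun a => hC _) hξ
  · -- Part 2
    constructor
    · rw [Measure.map_map measurable_fst hpairm]
      rfl
    · rw [Measure.map_map measurable_snd hpairm]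
      rfl
  · -- Part 3
    intro t htT f hf hfhist hbd
    obtain ⟨C, hC⟩ := hbd
    haveI : IsProbabilityMeasure (P.map fun ω => (X ω, Y ω)) :=
      Measure.isProbabilityMeasure_map hpairm.aemeasurable
    haveI : IsProbabilityMeasure (P.map ε) := Measure.isProbabilityMeasure_map hε.aemeasurable
    have hC0 : 0 ≤ C := le_trans (abs_nonneg _) (hC 0)
    set ν : Measure (TPath dZ T) := P.map ε with hν
    set π : Measure (TPath d T × TPath d T) := P.map fun ω => (X ω, Y ω) with hπ
    have hintm : Measurable fun p : TPath d T × TPath dZ T => f (Ymap μφ σφ De p) :=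
      hf.comp hYm'
    set h : TPath d T → ℝ := fun x => ∫ e, f (Ymap μφ σφ De (x, e)) ∂ν with hhdef
    have hhm : Measurable h := hintm.stronglyMeasurable.integral_prod_right'.measurable
    have hhb : ∀ x, |h x| ≤ C := by
      intro x
      have hb := norm_integral_le_of_norm_le_const (μ := ν)
        (f := fun e => f (Ymap μφ σφ De (x, e))) (C := C)
        (Filter.Eventually.of_forall fun e => by simpa [Real.norm_eq_abs] using hC _)
      simpa [hhdef, Real.norm_eq_abs] using hb
    have hheq : ∀ x, h (hist t x) = h x := by
      intro x
      simp only [hhdef]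
      refine integral_congr_ae (Filter.Eventually.of_forall fun e => ?_)
      calc f (Ymap μφ σφ De (hist t x, e))
          = f (hist t (Ymap μφ σφ De (hist t x, e))) := (hfhist _).symm
        _ = f (hist t (Ymap μφ σφ De (x, e))) := by rw [hist_Ymap hμφ hσφ hDe]
        _ = f (Ymap μφ σφ De (x, e)) := hfhist _
    -- core computation of set integrals over sets of the form fst⁻¹ A
    have hcore : ∀ A : Set (TPath d T), MeasurableSet A →
        ∫ p in Prod.fst ⁻¹' A, h p.1 ∂π = ∫ p in Prod.fst ⁻¹' A, f p.2 ∂π := by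
      intro A hA
      have hAm : MeasurableSet (Prod.fst ⁻¹' A : Set (TPath d T × TPath d T)) :=
        measurable_fst hA
      have hXA : MeasurableSet (X ⁻¹' A) := hX hA
      set θ : TPath d T → ℝ := A.indicator (fun _ => (1 : ℝ)) with hθdef
      have hθm : Measurable θ := measurable_const.indicator hA
      have hθb : ∀ x, |θ x| ≤ 1 := by
        intro x
        by_cases hx : x ∈ A <;> simp [hθdef, Set.indicator_apply, hx]
      have hL : ∫ p in Prod.fst ⁻¹' A, h p.1 ∂π = ∫ x, θ x * h x ∂(P.map X) := by
        rw [hπ, setIntegral_map (f := fun p : TPath d T × TPath d T => h p.1) hAm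
          ((hhm.comp measurable_fst).aestronglyMeasurable)
          hpairm.aemeasurable]
        have hpre : ((fun ω => (X ω, Y ω)) ⁻¹' (Prod.fst ⁻¹' A)) = X ⁻¹' A := rfl
        rw [hpre, ← integral_indicator hXA,
          integral_map hX.aemeasurable (f := fun x => θ x * h x) (hθm.mul hhm).aestronglyMeasurable]
        refine integral_congr_ae (Filter.Eventually.of_forall fun ω => ?_)
        by_cases hx : X ω ∈ A <;> simp [Set.indicator_apply, hx, hθdef]
      have hR : ∫ p in Prod.fst ⁻¹' A, f p.2 ∂π = ∫ x, θ x * h x ∂(P.map X) := by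
        rw [hπ, setIntegral_map (f := fun p : TPath d T × TPath d T => f p.2) hAm
          ((hf.comp measurable_snd).aestronglyMeasurable)
          hpairm.aemeasurable]
        have hpre : ((fun ω => (X ω, Y ω)) ⁻¹' (Prod.fst ⁻¹' A)) = X ⁻¹' A := rfl
        rw [hpre, ← integral_indicator hXA]
        have hΦm : Measurable fun p : TPath d T × TPath dZ T =>
            θ p.1 * f (Ymap μφ σφ De p) := (hθm.comp measurable_fst).mul hintm
        have hΦb : ∀ p : TPath d T × TPath dZ T,
            |θ p.1 * f (Ymap μφ σφ De p)| ≤ 1 * C := by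
          intro p
          rw [abs_mul]
          exact mul_le_mul (hθb _) (hC _) (abs_nonneg _) zero_le_one
        calc ∫ ω, (X ⁻¹' A).indicator (fun ω => f ((X ω, Y ω).2)) ω ∂P
            = ∫ ω, θ (X ω) * f (Ymap μφ σφ De (X ω, ε ω)) ∂P := by
              refine integral_congr_ae (Filter.Eventually.of_forall fun ω => ?_)
              by_cases hx : X ω ∈ A <;>
                simp [Set.indicator_apply, hx, hθdef, hYeq ω]
          _ = ∫ x, ∫ e, θ x * f (Ymap μφ σφ De (x, e)) ∂(P.map ε) ∂(P.map X) :=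
              fubini_indep P hX hε hindep hΦm hΦb
          _ = ∫ x, θ x * h x ∂(P.map X) := by
              refine integral_congr_ae (Filter.Eventually.of_forall fun x => ?_)
              simp only [hhdef, hν]
              rw [integral_const_mul]
      rw [hL, hR]
    -- identify both conditional expectations with the candidate
    have hm₂' : MeasurableSpace.comap (Prod.fst : TPath d T × TPath d T → TPath d T)
        inferInstance ≤ (inferInstance : MeasurableSpace (TPath d T × TPath d T)) :=
      measurable_fst.comap_le
    have hm₁' : MeasurableSpace.comap (fun p : TPath d T × TPath d T => hist t p.1)
        inferInstance ≤ (inferInstance : MeasurableSpace (TPath d T × TPath d T)) :=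
      (measurable_hist.comp measurable_fst).comap_le
    haveI : IsFiniteMeasure (π.trim hm₂') := isFiniteMeasure_trim hm₂'
    haveI : SigmaFinite (π.trim hm₂') := inferInstance
    haveI : IsFiniteMeasure (π.trim hm₁') := isFiniteMeasure_trim hm₁'
    haveI : SigmaFinite (π.trim hm₁') := inferInstance
    have hfsnd_int : Integrable (fun p : TPath d T × TPath d T => f p.2) π :=
      intOfBdd (hf.comp measurable_snd).aestronglyMeasurable (fun p => hC _)
    have hcand_int : Integrable (fun p : TPath d T × TPath d T => h p.1) π :=
      intOfBdd (hhm.comp measurable_fst).aestronglyMeasurable (fun p => hhb _)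
    have e1 : (fun p : TPath d T × TPath d T => h p.1)
        =ᵐ[π] π[(fun p => f p.2) | MeasurableSpace.comap Prod.fst inferInstance] := by
      refine ae_eq_condExp_of_forall_setIntegral_eq hm₂' hfsnd_int
        (fun s _ _ => hcand_int.integrableOn) ?_ ?_
      · intro s hs hfin
        rw [MeasurableSpace.measurableSet_comap] at hs
        obtain ⟨A, hA, rfl⟩ := hs
        exact hcore A hA
      · exact ((hhm.comp
          ((measurable_iff_comap_le (f := (Prod.fst : TPath d T × TPath d T → TPath d T))).mpr
            le_rfl)).stronglyMeasurable).aestronglyMeasurable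
    have e2 : (fun p : TPath d T × TPath d T => h p.1)
        =ᵐ[π] π[(fun p => f p.2) |
          MeasurableSpace.comap (fun p => hist t p.1) inferInstance] := by
      refine ae_eq_condExp_of_forall_setIntegral_eq hm₁' hfsnd_int
        (fun s _ _ => hcand_int.integrableOn) ?_ ?_
      · intro s hs hfin
        rw [MeasurableSpace.measurableSet_comap] at hs
        obtain ⟨A, hA, rfl⟩ := hs
        have hset : ((fun p : TPath d T × TPath d T => hist t p.1) ⁻¹' A)
            = Prod.fst ⁻¹' (hist t ⁻¹' A) := rfl
        rw [hset]
        exact hcore _ (measurable_hist hA)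
      · have hfactor : (fun p : TPath d T × TPath d T => h p.1)
            = fun p => h (hist t p.1) := funext fun p => (hheq p.1).symm
        rw [hfactor]
        exact ((hhm.comp
          ((measurable_iff_comap_le
            (f := fun p : TPath d T × TPath d T => hist t p.1)).mpr
            le_rfl)).stronglyMeasurable).aestronglyMeasurable
    exact e1.symm.trans e2

end
end

section
/- Let d,d_Z,T ∈ ℕ, let μ_φ: ℝ^{dT} → ℝ^{d_Z T}, σ_φ: ℝ^{dT} → ℝ^{d_Z T} and De_θ: ℝ^{d_Z T} → ℝ^{dT} be causal maps, let X ∼ μ_data be a random path in ℝ^{dT} with finite first moment and ε ∼ N(0, I_{d_Z T}) independent of X, and set Y = De_θ(μ_φ(X) + σ_φ(X)⊙ε) with law μ_rec. Then CW₁(μ_data, μ_rec) ≤ 𝓛_rec := E[‖X − Y‖], where ‖x‖ = Σ_{t=1}^T ‖x_t‖_{ℝ^d}. -/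
open MeasureTheory ProbabilityTheory ENNReal

noncomputable section

/-- The reconstruction loss bounds the causal Wasserstein distance:
`CW₁(μ_data, μ_rec) ≤ E[‖X − Y‖]`. -/
theorem stmt5 (d dZ T : ℕ) {Ω : Type*} [MeasurableSpace Ω] (P : Measure Ω)
    [IsProbabilityMeasure P]
    (μφ σφ : TPath d T → TPath dZ T) (De : TPath dZ T → TPath d T)
    (hμφ : IsCausalMap μφ) (hσφ : IsCausalMap σφ) (hDe : IsCausalMap De)
    (X : Ω → TPath d T) (ε : Ω → TPath dZ T) (hX : Measurable X) (hε : Measurable ε)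
    (hmom : Integrable (fun ω => pathNorm (X ω)) P)
    (hεlaw : P.map ε = stdGaussian dZ T) (hindep : IndepFun X ε P)
    (Y : Ω → TPath d T)
    (hY : Y = fun ω => De (fun t i => μφ (X ω) t i + σφ (X ω) t i * ε ω t i)) :
    CW1 (P.map X) (P.map Y) ≤ ∫ ω, pathNorm (X ω - Y ω) ∂P := by
  classical
  have hU : Measurable (fun q : TPath d T × TPath dZ T =>
      (fun s i => μφ q.1 s i + σφ q.1 s i * q.2 s i : TPath dZ T)) := by
    refine measurable_pi_lambda _ fun s => measurable_pi_lambda _ fun i => ?_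
    exact ((hμφ.1.comp measurable_fst).eval.eval).add
      (((hσφ.1.comp measurable_fst).eval.eval).mul (measurable_snd.eval.eval))
  have hYm : Measurable Y := by
    rw [hY]; exact hDe.1.comp (hU.comp (hX.prodMk hε))
  set Z : Ω → TPath d T × TPath d T := fun ω => (X ω, Y ω) with hZdef
  have hZ : Measurable Z := hX.prodMk hYm
  set π : Measure (TPath d T × TPath d T) := P.map Z with hπdef
  haveI : IsProbabilityMeasure π := Measure.isProbabilityMeasure_map hZ.aemeasurable
  have hcoup : IsCoupling (P.map X) (P.map Y) π := by
    constructor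
    · rw [hπdef, Measure.map_map measurable_fst hZ]; rfl
    · rw [hπdef, Measure.map_map measurable_snd hZ]; rfl
  -- causality of π
  have hcausal : IsCausalCoupling π := by
    rintro t ht f hf hfh ⟨C, hC⟩
    set ν : Measure (TPath dZ T) := P.map ε with hνdef
    haveI : IsProbabilityMeasure ν := Measure.isProbabilityMeasure_map hε.aemeasurable
    set μX : Measure (TPath d T) := P.map X with hμXdef
    haveI : IsProbabilityMeasure μX := Measure.isProbabilityMeasure_map hX.aemeasurable
    set W : Ω → TPath d T × TPath dZ T := fun ω => (X ω, ε ω) with hWdef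
    have hW : Measurable W := hX.prodMk hε
    have hlaw : P.map W = μX.prod ν :=
      (ProbabilityTheory.indepFun_iff_map_prod_eq_prod_map_map hX.aemeasurable
        hε.aemeasurable).mp hindep
    set F : TPath d T × TPath dZ T → ℝ :=
      fun q => f (De (fun s i => μφ q.1 s i + σφ q.1 s i * q.2 s i)) with hFdef
    have hFm : Measurable F := hf.comp (hDe.1.comp hU)
    have hC0 : 0 ≤ C := le_trans (abs_nonneg _) (hC 0)
    have hFb : ∀ q, ‖F q‖ ≤ C := fun q => by
      simpa [Real.norm_eq_abs] using hC (De fun s i => μφ q.1 s i + σφ q.1 s i * q.2 s i)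
    set g : TPath d T → ℝ := fun x => ∫ e, F (x, e) ∂ν with hgdef
    have hgm : StronglyMeasurable g := hFm.stronglyMeasurable.integral_prod_right'
    have hgb : ∀ x, ‖g x‖ ≤ C := fun x => by
      have := norm_integral_le_of_norm_le_const (μ := ν) (f := fun e => F (x, e))
        (C := C) (Filter.Eventually.of_forall fun e => hFb _)
      simpa using this
    have hhistm : Measurable (hist t : TPath d T → TPath d T) := by
      refine measurable_pi_lambda _ fun s => ?_
      by_cases h : (s : ℕ) < t
      · simpa [hist, h] using measurable_pi_apply s
      · simp [hist, h]
    -- F is invariant under truncating the first argument at time t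
    have hFhist : ∀ x e, F (hist t x, e) = F (x, e) := by
      intro x e
      show f (De _) = f (De _)
      rw [← hfh (De fun s i => μφ (hist t x) s i + σφ (hist t x) s i * e s i),
        ← hfh (De fun s i => μφ x s i + σφ x s i * e s i)]
      congr 1
      funext s
      show (if (s : ℕ) < t then _ else _) = (if (s : ℕ) < t then _ else _)
      by_cases hs : (s : ℕ) < t
      · rw [if_pos hs, if_pos hs]
        refine hDe.2 s _ _ fun r hr => ?_
        have hxr : ∀ r' : Fin T, r' ≤ r → hist t x r' = x r' := by
          intro r' hr'
          have : (r' : ℕ) < t :=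
            lt_of_le_of_lt (le_trans (Fin.le_def.mp hr') (Fin.le_def.mp hr)) hs
          simp [hist, this]
        have hμe : μφ (hist t x) r = μφ x r := hμφ.2 r _ _ hxr
        have hσe : σφ (hist t x) r = σφ x r := hσφ.2 r _ _ hxr
        funext i
        rw [hμe, hσe]
      · rw [if_neg hs, if_neg hs]
    have hg_hist : ∀ x, g (hist t x) = g x := by
      intro x
      show (∫ e, F (hist t x, e) ∂ν) = ∫ e, F (x, e) ∂ν
      exact integral_congr_ae (Filter.Eventually.of_forall fun e => hFhist x e)
    have hFY : ∀ ω, f (Y ω) = F (W ω) := by intro ω; rw [hY]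
    have hFint : ∀ (ρ : Measure (TPath d T × TPath dZ T)), IsFiniteMeasure ρ →
        Integrable F ρ := by
      intro ρ hρ
      exact Integrable.mono' (integrable_const C) hFm.aestronglyMeasurable
        (Filter.Eventually.of_forall hFb)
    -- the key set-integral identity
    have hkey : ∀ B : Set (TPath d T), MeasurableSet B →
        ∫ ω in X ⁻¹' B, f (Y ω) ∂P = ∫ ω in X ⁻¹' B, g (X ω) ∂P := by
      intro B hB
      haveI : IsFiniteMeasure (μX.restrict B) :=
        ⟨by rw [Measure.restrict_apply_univ]; exact measure_lt_top _ _⟩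
      have h1 : ∫ ω in X ⁻¹' B, f (Y ω) ∂P
          = ∫ q in B ×ˢ Set.univ, F q ∂(P.map W) := by
        rw [setIntegral_map (hB.prod MeasurableSet.univ) hFm.aestronglyMeasurable
          hW.aemeasurable]
        have hset : W ⁻¹' (B ×ˢ Set.univ) = X ⁻¹' B := by
          ext ω; simp [hWdef]
        rw [hset]
        exact setIntegral_congr_fun (hX hB) fun ω _ => hFY ω
      have h2 : ∫ q in B ×ˢ Set.univ, F q ∂(μX.prod ν) = ∫ x in B, g x ∂μX := by
        have h3 : (μX.prod ν).restrict (B ×ˢ Set.univ) = (μX.restrict B).prod ν := by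
          rw [← Measure.prod_restrict, Measure.restrict_univ]
        rw [show (∫ q in B ×ˢ Set.univ, F q ∂(μX.prod ν))
            = ∫ q, F q ∂((μX.prod ν).restrict (B ×ˢ Set.univ)) from rfl, h3,
          MeasureTheory.integral_prod F (hFint _ inferInstance)]
      have h4 : ∫ x in B, g x ∂μX = ∫ ω in X ⁻¹' B, g (X ω) ∂P := by
        rw [hμXdef, setIntegral_map hB hgm.aestronglyMeasurable hX.aemeasurable]
      rw [h1, hlaw, h2, h4]
    -- both conditional expectations equal g ∘ fst a.e.
    have main : ∀ κ : TPath d T → TPath d T, Measurable κ → (∀ x, g (κ x) = g x) →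
        (fun p : TPath d T × TPath d T => g p.1) =ᵐ[π]
          π[(fun p => f p.2) | MeasurableSpace.comap (fun p => κ p.1) inferInstance] := by
      intro κ hκ hgκ
      have hmle : MeasurableSpace.comap (fun p : TPath d T × TPath d T => κ p.1)
          inferInstance ≤ (inferInstance : MeasurableSpace (TPath d T × TPath d T)) :=
        (hκ.comp measurable_fst).comap_le
      haveI : SigmaFinite (π.trim hmle) := inferInstance
      refine ae_eq_condExp_of_forall_setIntegral_eq hmle ?_ ?_ ?_ ?_
      · exact Integrable.mono' (integrable_const C)
          (hf.comp measurable_snd).aestronglyMeasurable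
          (Filter.Eventually.of_forall fun p => by
            simpa [Real.norm_eq_abs] using hC p.2)
      · intro s _ _
        exact (Integrable.mono' (integrable_const C)
          (hgm.measurable.comp measurable_fst).aestronglyMeasurable
          (Filter.Eventually.of_forall fun p => hgb p.1)).integrableOn
      · intro s hs _
        obtain ⟨A, hA, rfl⟩ := hs
        have hB : MeasurableSet (κ ⁻¹' A) := hκ hA
        have hpre : (fun p : TPath d T × TPath d T => κ p.1) ⁻¹' A
            = Prod.fst ⁻¹' (κ ⁻¹' A) := rfl
        have e1 : ∫ p in Prod.fst ⁻¹' (κ ⁻¹' A), g p.1 ∂π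
            = ∫ ω in X ⁻¹' (κ ⁻¹' A), g (X ω) ∂P := by
          rw [hπdef, setIntegral_map (f := fun p : TPath d T × TPath d T => g p.1)
            (measurable_fst hB)
            (hgm.measurable.comp measurable_fst).aestronglyMeasurable hZ.aemeasurable]
          rfl
        have e2 : ∫ p in Prod.fst ⁻¹' (κ ⁻¹' A), f p.2 ∂π
            = ∫ ω in X ⁻¹' (κ ⁻¹' A), f (Y ω) ∂P := by
          rw [hπdef, setIntegral_map (f := fun p : TPath d T × TPath d T => f p.2)
            (measurable_fst hB)
            (hf.comp measurable_snd).aestronglyMeasurable hZ.aemeasurable]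
          rfl
        rw [hpre, e1, e2, hkey _ hB]
      · refine ⟨fun p => g (κ p.1), ?_, Filter.Eventually.of_forall fun p => (hgκ p.1).symm⟩
        have hproj : Measurable[MeasurableSpace.comap
            (fun p : TPath d T × TPath d T => κ p.1) inferInstance]
            (fun p : TPath d T × TPath d T => κ p.1) := Measurable.of_comap_le le_rfl
        exact (hgm.measurable.comp hproj).stronglyMeasurable
    have c1 := main id measurable_id fun x => rfl
    have c2 := main (hist t) hhistm hg_hist
    exact c1.symm.trans c2
  -- conclude via the coupling π
  have hcont : Continuous (pathNorm : TPath d T → ℝ) := by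
    refine continuous_finset_sum _ fun s _ => ?_
    exact Real.continuous_sqrt.comp
      (continuous_finset_sum _ fun i _ => ((continuous_apply i).comp (continuous_apply s)).pow 2)
  have hinteq : ∫ p, pathNorm (p.1 - p.2) ∂π = ∫ ω, pathNorm (X ω - Y ω) ∂P := by
    rw [hπdef]
    exact integral_map hZ.aemeasurable
      ((hcont.comp (continuous_fst.sub continuous_snd)).aestronglyMeasurable)
  have hmem : (∫ p, pathNorm (p.1 - p.2) ∂π) ∈
      { r | ∃ π' : Measure (TPath d T × TPath d T), IsCoupling (P.map X) (P.map Y) π' ∧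
        IsCausalCoupling π' ∧ r = ∫ p, pathNorm (p.1 - p.2) ∂π' } :=
    ⟨π, hcoup, hcausal, rfl⟩
  have hbdd : BddBelow { r | ∃ π' : Measure (TPath d T × TPath d T),
      IsCoupling (P.map X) (P.map Y) π' ∧ IsCausalCoupling π' ∧
      r = ∫ p, pathNorm (p.1 - p.2) ∂π' } := by
    refine ⟨0, ?_⟩
    rintro r ⟨π', -, -, rfl⟩
    exact integral_nonneg fun p => Finset.sum_nonneg fun s _ => Real.sqrt_nonneg _
  calc CW1 (P.map X) (P.map Y) ≤ ∫ p, pathNorm (p.1 - p.2) ∂π := csInf_le hbdd hmem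
    _ = ∫ ω, pathNorm (X ω - Y ω) ∂P := hinteq

end
end
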